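/- arXiv:1903.00278 — 2 statements merged into one kernel-verified Lean document; each statement's English description precedes it below -/
import Mathlib

section
/- Let X_1, ..., X_n be independent, square-integrable real-valued random variables such that for some constant b > 0, |X_i| ≤ b almost surely for all i. Let v = Σ_{i=1}^n E[X_i^2], and assume v > 0. Then for every ε > 0, P( |(1/n) Σ_{i=1}^n (X_i − E[X_i])| > ε ) ≤ 2·exp( −(v/b^2)·h(n·b·ε/v) ), where h(u) = (1+u)·ln(1+u) − u. -/
open MeasureTheory ProbabilityTheory Real
open scoped ENNReal

/-- The function `h(u) = (1+u)·ln(1+u) − u` from Bennett's inequality. -/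
noncomputable def bennettH (u : ℝ) : ℝ := (1 + u) * Real.log (1 + u) - u

/-!
Since `exp y - y - 1 = ∑ yᵏ⁺²/(k+2)!`, the ratio `(exp y - y - 1)/y²` at `y` is at most its value
at any `t ≥ |y|`. Hence `|x| ≤ b` gives
`exp (t x) ≤ 1 + t x + (x²/b²)(exp (t b) - t b - 1)`, and taking expectations and multiplying over
the independent summands bounds the moment generating function of the centred sum by
`exp ((v/b²)(exp (t b) - t b - 1))`. Chernoff's bound at the optimal `t = log (1 + b s/v) / b`
turns this into `exp (-(v/b²) h(b s/v))` for the upper tail at `s`; the lower tail is the upper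
tail of `-X`, and `s = n ε`.
-/

lemma hasSum_pow_div_factorial_add_two (x : ℝ) :
    HasSum (fun n : ℕ ↦ x ^ (n + 2) / (n + 2).factorial) (exp x - x - 1) := by
  have h := (hasSum_nat_add_iff' 2).mpr (NormedSpace.expSeries_div_hasSum_exp x)
  rw [← exp_eq_exp_ℝ] at h
  simpa [Finset.sum_range_succ, sub_add_eq_sub_sub_swap] using h

lemma sq_mul_exp_sub_sub_one_le {x t : ℝ} (hx : |x| ≤ t) :
    t ^ 2 * (exp x - x - 1) ≤ x ^ 2 * (exp t - t - 1) := by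
  refine hasSum_le (fun n ↦ ?_) ((hasSum_pow_div_factorial_add_two x).mul_left _)
    ((hasSum_pow_div_factorial_add_two t).mul_left _)
  rw [mul_div_assoc', mul_div_assoc']
  gcongr ?_ / _
  have hxn : x ^ n ≤ t ^ n := by
    calc x ^ n ≤ |x| ^ n := (le_abs_self _).trans (pow_abs x n).ge
      _ ≤ t ^ n := pow_le_pow_left₀ (abs_nonneg x) hx n
  calc t ^ 2 * x ^ (n + 2) = x ^ 2 * (t ^ 2 * x ^ n) := by ring
    _ ≤ x ^ 2 * (t ^ 2 * t ^ n) := by gcongr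
    _ = x ^ 2 * t ^ (n + 2) := by ring

lemma exp_mul_le_of_abs_le {x b t : ℝ} (ht : 0 < t) (hb : 0 < b) (hx : |x| ≤ b) :
    exp (t * x) ≤ 1 + t * x + x ^ 2 / b ^ 2 * (exp (t * b) - t * b - 1) := by
  have key := sq_mul_exp_sub_sub_one_le (x := t * x) (t := t * b)
    (by rw [abs_mul, abs_of_pos ht]; gcongr)
  rw [div_mul_eq_mul_div, ← sub_le_iff_le_add', ← mul_div_mul_left _ _ (pow_pos ht 2).ne',
    le_div_iff₀ (by positivity)]
  linear_combination key

lemma neg_mul_add_mul_exp_sub_eq_neg_mul_bennettH {b v s : ℝ} (hb : 0 < b) (hv : 0 < v)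
    (hs : 0 ≤ s) :
    -(log (1 + b * s / v) / b) * s
        + v / b ^ 2 * (exp (log (1 + b * s / v) / b * b) - log (1 + b * s / v) / b * b - 1)
      = -(v / b ^ 2) * bennettH (b * s / v) := by
  rw [div_mul_cancel₀ _ hb.ne', exp_log (by positivity), bennettH]
  field_simp
  ring

section

variable {Ω : Type*} [MeasurableSpace Ω] {μ : Measure Ω} [IsProbabilityMeasure μ] {b t : ℝ}

lemma mgf_le_exp_of_abs_le {Y : Ω → ℝ} (hY : AEMeasurable Y μ) (hb : 0 < b)
    (hYb : ∀ᵐ ω ∂μ, |Y ω| ≤ b) (ht : 0 < t) :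
    mgf Y μ t ≤ exp (t * μ[Y] + (∫ ω, Y ω ^ 2 ∂μ) / b ^ 2 * (exp (t * b) - t * b - 1)) := by
  have hL2 : MemLp Y 2 μ := MemLp.of_bound hY.aestronglyMeasurable b (by simpa using hYb)
  have hY1 := hL2.integrable one_le_two
  have hY2 := hL2.integrable_sq
  set c := exp (t * b) - t * b - 1
  have hquad : Integrable (fun ω ↦ 1 + t * Y ω + Y ω ^ 2 / b ^ 2 * c) μ :=
    ((integrable_const 1).add (hY1.const_mul t)).add ((hY2.div_const _).mul_const c)
  calc mgf Y μ t ≤ ∫ ω, (1 + t * Y ω + Y ω ^ 2 / b ^ 2 * c) ∂μ :=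
        integral_mono_ae
          (integrable_exp_mul_of_le t b ht.le hY (hYb.mono fun _ h ↦ (le_abs_self _).trans h))
          hquad (hYb.mono fun _ h ↦ exp_mul_le_of_abs_le ht hb h)
    _ = 1 + t * μ[Y] + (∫ ω, Y ω ^ 2 ∂μ) / b ^ 2 * c := by
        rw [integral_add (f := fun ω ↦ 1 + t * Y ω) ((integrable_const 1).add (hY1.const_mul t))
            ((hY2.div_const _).mul_const c),
          integral_add (integrable_const 1) (hY1.const_mul t), integral_mul_const, integral_div,
          integral_const_mul]
        simp
    _ ≤ _ := by linarith [add_one_le_exp (t * μ[Y] + (∫ ω, Y ω ^ 2 ∂μ) / b ^ 2 * c)]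

lemma mgf_sub_integral_le_of_abs_le {Y : Ω → ℝ} (hY : AEMeasurable Y μ) (hb : 0 < b)
    (hYb : ∀ᵐ ω ∂μ, |Y ω| ≤ b) (ht : 0 < t) :
    mgf (fun ω ↦ Y ω - μ[Y]) μ t
      ≤ exp ((∫ ω, Y ω ^ 2 ∂μ) / b ^ 2 * (exp (t * b) - t * b - 1)) := by
  simp_rw [sub_eq_add_neg _ μ[Y]]
  calc mgf (fun ω ↦ Y ω + -μ[Y]) μ t
      = mgf Y μ t * exp (t * -μ[Y]) := mgf_add_const _
    _ ≤ exp (t * μ[Y] + (∫ ω, Y ω ^ 2 ∂μ) / b ^ 2 * (exp (t * b) + -(t * b) + -1))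
          * exp (t * -μ[Y]) := by
        gcongr
        simpa only [sub_eq_add_neg] using mgf_le_exp_of_abs_le hY hb hYb ht
    _ = _ := by rw [← exp_add]; ring_nf

variable {ι : Type*} [Fintype ι] {X : ι → Ω → ℝ} {v s : ℝ}

lemma mgf_sum_sub_integral_le (hindep : iIndepFun X μ) (hmeas : ∀ i, AEMeasurable (X i) μ)
    (hb : 0 < b) (hbound : ∀ i, ∀ᵐ ω ∂μ, |X i ω| ≤ b) (hv : ∑ i, ∫ ω, X i ω ^ 2 ∂μ ≤ v)
    (ht : 0 < t) :
    mgf (fun ω ↦ ∑ i, (X i ω - μ[X i])) μ t ≤ exp (v / b ^ 2 * (exp (t * b) - t * b - 1)) := by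
  set Y : ι → Ω → ℝ := fun i ω ↦ X i ω - μ[X i]
  have hY_indep : iIndepFun Y μ :=
    (hindep.comp (fun i (x : ℝ) ↦ x - μ[X i]) fun _ ↦ measurable_id.sub_const _ :)
  have hsum : (fun ω ↦ ∑ i, Y i ω) = ∑ i, Y i := by ext; simp
  calc mgf (fun ω ↦ ∑ i, Y i ω) μ t
      = ∏ i, mgf (Y i) μ t := by
        rw [hsum, hY_indep.mgf_sum₀ fun i ↦ (hmeas i).sub_const _]
    _ ≤ ∏ i, exp ((∫ ω, X i ω ^ 2 ∂μ) / b ^ 2 * (exp (t * b) - t * b - 1)) :=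
        Finset.prod_le_prod (fun _ _ ↦ mgf_nonneg)
          fun i _ ↦ mgf_sub_integral_le_of_abs_le (hmeas i) hb (hbound i) ht
    _ = exp ((∑ i, ∫ ω, X i ω ^ 2 ∂μ) / b ^ 2 * (exp (t * b) - t * b - 1)) := by
        rw [← exp_sum, Finset.sum_div, Finset.sum_mul]
    _ ≤ _ := by gcongr; linarith [add_one_le_exp (t * b)]

theorem measureReal_sum_sub_integral_ge_le (hindep : iIndepFun X μ)
    (hmeas : ∀ i, AEMeasurable (X i) μ) (hb : 0 < b) (hbound : ∀ i, ∀ᵐ ω ∂μ, |X i ω| ≤ b)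
    (hv : ∑ i, ∫ ω, X i ω ^ 2 ∂μ ≤ v) (hvpos : 0 < v) (hs : 0 < s) :
    μ.real {ω | s ≤ ∑ i, (X i ω - μ[X i])} ≤ exp (-(v / b ^ 2) * bennettH (b * s / v)) := by
  set t := log (1 + b * s / v) / b
  have ht : 0 < t := div_pos (log_pos (by simp; positivity)) hb
  have hint : Integrable (fun ω ↦ exp (t * ∑ i, (X i ω - μ[X i]))) μ := by
    refine integrable_exp_mul_of_le t (∑ i, (b - μ[X i])) ht.le (by fun_prop) ?_
    filter_upwards [ae_all_iff.mpr hbound] with ω hω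
    exact Finset.sum_le_sum fun i _ ↦ by linarith [le_abs_self (X i ω), hω i]
  calc μ.real {ω | s ≤ ∑ i, (X i ω - μ[X i])}
      ≤ exp (-t * s) * mgf (fun ω ↦ ∑ i, (X i ω - μ[X i])) μ t :=
        measure_ge_le_exp_mul_mgf s ht.le hint
    _ ≤ exp (-t * s) * exp (v / b ^ 2 * (exp (t * b) - t * b - 1)) := by
        gcongr; exact mgf_sum_sub_integral_le hindep hmeas hb hbound hv ht
    _ = exp (-(v / b ^ 2) * bennettH (b * s / v)) := by
        rw [← exp_add, neg_mul_add_mul_exp_sub_eq_neg_mul_bennettH hb hvpos hs.le]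

theorem measureReal_abs_sum_sub_integral_ge_le (hindep : iIndepFun X μ)
    (hmeas : ∀ i, AEMeasurable (X i) μ) (hb : 0 < b) (hbound : ∀ i, ∀ᵐ ω ∂μ, |X i ω| ≤ b)
    (hv : ∑ i, ∫ ω, X i ω ^ 2 ∂μ ≤ v) (hvpos : 0 < v) (hs : 0 < s) :
    μ.real {ω | s ≤ |∑ i, (X i ω - μ[X i])|}
      ≤ 2 * exp (-(v / b ^ 2) * bennettH (b * s / v)) := by
  have hupper := measureReal_sum_sub_integral_ge_le hindep hmeas hb hbound hv hvpos hs
  have hlower := measureReal_sum_sub_integral_ge_le (X := fun i ω ↦ -X i ω)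
    (hindep.comp (fun _ ↦ Neg.neg) fun _ ↦ measurable_neg) (fun i ↦ (hmeas i).neg) hb
    (by simpa only [abs_neg] using hbound) (by simpa only [neg_sq] using hv) hvpos hs
  have hsplit : {ω | s ≤ |∑ i, (X i ω - μ[X i])|} ⊆ {ω | s ≤ ∑ i, (X i ω - μ[X i])}
      ∪ {ω | s ≤ ∑ i, (-X i ω - ∫ ω', -X i ω' ∂μ)} := by
    intro ω hω
    simpa only [Set.mem_union, Set.mem_ofPred_eq, integral_neg, neg_sub_neg, ← neg_sub (X _ ω),
      Finset.sum_neg_distrib, ← le_abs] using hω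
  calc μ.real {ω | s ≤ |∑ i, (X i ω - μ[X i])|}
      ≤ μ.real {ω | s ≤ ∑ i, (X i ω - μ[X i])}
        + μ.real {ω | s ≤ ∑ i, (-X i ω - ∫ ω', -X i ω' ∂μ)} :=
        (measureReal_mono hsplit).trans (measureReal_union_le _ _)
    _ ≤ 2 * exp (-(v / b ^ 2) * bennettH (b * s / v)) := by linarith

end

theorem bennett_inequality_general
    {Ω : Type*} [MeasurableSpace Ω] (P : Measure Ω) [IsProbabilityMeasure P]
    (n : ℕ) (hn : 0 < n) (X : Fin n → Ω → ℝ)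
    (hmeas : ∀ i, Measurable (X i))
    (hindep : iIndepFun X P)
    (b : ℝ) (hb : 0 < b) (hbound : ∀ i, ∀ᵐ ω ∂P, |X i ω| ≤ b)
    (v : ℝ) (hv : v = ∑ i, ∫ ω, (X i ω) ^ 2 ∂P) (hvpos : 0 < v)
    (ε : ℝ) (hε : 0 < ε) :
    P {ω | |(∑ i, (X i ω - ∫ ω', X i ω' ∂P)) / (n : ℝ)| > ε}
      ≤ ENNReal.ofReal (2 * Real.exp (-(v / b ^ 2) * bennettH ((n : ℝ) * b * ε / v))) := by
  have hn' : (0 : ℝ) < n := Nat.cast_pos.mpr hn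
  have hsub : {ω | |(∑ i, (X i ω - ∫ ω', X i ω' ∂P)) / (n : ℝ)| > ε}
      ⊆ {ω | n * ε ≤ |∑ i, (X i ω - ∫ ω', X i ω' ∂P)|} := fun ω hω ↦ by
    rw [Set.mem_ofPred_eq, gt_iff_lt, abs_div, Nat.abs_cast, lt_div_iff₀ hn'] at hω
    exact (mul_comm ε n ▸ hω).le
  calc P {ω | |(∑ i, (X i ω - ∫ ω', X i ω' ∂P)) / (n : ℝ)| > ε}
      ≤ ENNReal.ofReal (P.real {ω | n * ε ≤ |∑ i, (X i ω - ∫ ω', X i ω' ∂P)|}) := by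
        rw [ofReal_measureReal]; exact measure_mono hsub
    _ ≤ _ := by
        rw [show (n : ℝ) * b * ε = b * (n * ε) by ring]
        exact ENNReal.ofReal_le_ofReal <| measureReal_abs_sum_sub_integral_ge_le hindep
          (fun i ↦ (hmeas i).aemeasurable) hb hbound hv.ge hvpos (by positivity)

/-- **Bennett's inequality.** Let `X 1, ..., X n` be independent, square-integrable
real random variables, `|X i| ≤ b` a.s., `v = ∑ i, E[(X i)^2] > 0`. Then for every `ε > 0`,
`P(|(1/n) ∑ i (X i − E[X i])| > ε) ≤ 2 exp(−(v/b²) h(n b ε / v))`. -/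
theorem bennett_inequality
    {Ω : Type*} [MeasurableSpace Ω] (P : Measure Ω) [IsProbabilityMeasure P]
    (n : ℕ) (hn : 0 < n) (X : Fin n → Ω → ℝ)
    (hmeas : ∀ i, Measurable (X i))
    (hindep : iIndepFun X P)
    (hL2 : ∀ i, MemLp (X i) 2 P)
    (b : ℝ) (hb : 0 < b) (hbound : ∀ i, ∀ᵐ ω ∂P, |X i ω| ≤ b)
    (v : ℝ) (hv : v = ∑ i, ∫ ω, (X i ω) ^ 2 ∂P) (hvpos : 0 < v)
    (ε : ℝ) (hε : 0 < ε) :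
    P {ω | |(∑ i, (X i ω - ∫ ω', X i ω' ∂P)) / (n : ℝ)| > ε}
      ≤ ENNReal.ofReal (2 * Real.exp (-(v / b ^ 2) * bennettH ((n : ℝ) * b * ε / v))) :=
  bennett_inequality_general P n hn X hmeas hindep b hb hbound v hv hvpos ε hε
end

section
/- Let h(u) = (1+u)·ln(1+u) − u. For all ε ∈ (0, 1], all p with 0 < p ≤ √ε, and all δ ∈ (0,1), one has ln(2/δ)/h(ε/p) ≤ (8/3)·ln(2/δ)/ε. In particular, the expected number of labels required by active labeling, namely p times the Bennett sample size ln(2/δ)/(p·h(ε/p)), is at most (8/3)·ln(2/δ)/ε, i.e., of order O(1/ε) whenever the disagreement fraction satisfies p = O(√ε). -/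
/-!
Bennett's `h` dominates Bernstein's `u² / (2 (1 + u/3)) = 3u² / (2u + 6)` on `[0, ∞)`: both vanish
at `0`, and `h' u = log (1 + u) ≥ 2u / (u + 2)` exceeds the derivative of Bernstein's function.
For `u = ε / p` with `p ≤ √ε ≤ 1` we have `ε ≤ u` and `ε ≤ u²`, so Bernstein's function at `u` is
at least `3ε / 8`, which bounds `ln(2/δ) / h(ε/p)` by `(8/3) ln(2/δ) / ε`.
-/

open Real

lemma hasDerivAt_bennettH {u : ℝ} (hu : 1 + u ≠ 0) : HasDerivAt bennettH (log (1 + u)) u := by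
  have hlin : HasDerivAt (fun v : ℝ => 1 + v) 1 u := (hasDerivAt_id' u).const_add 1
  have h := (hlin.mul (hlin.log hu)).sub (hasDerivAt_id' u)
  rwa [one_mul, mul_one_div_cancel hu, add_sub_cancel_right] at h

lemma hasDerivAt_three_mul_sq_div {u : ℝ} (hu : 2 * u + 6 ≠ 0) :
    HasDerivAt (fun v : ℝ => 3 * v ^ 2 / (2 * v + 6))
      (3 * u * (u + 6) / (2 * (u + 3) ^ 2)) u := by
  have hden : HasDerivAt (fun v : ℝ => 2 * v + 6) 2 u := by
    simpa using ((hasDerivAt_id u).const_mul 2).add_const 6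
  have hu3 : u + 3 ≠ 0 := fun h => hu (by linear_combination 2 * h)
  refine (((hasDerivAt_pow 2 u).const_mul 3).div hden hu).congr_deriv ?_
  field_simp
  ring

lemma three_mul_sq_div_le_bennettH {u : ℝ} (hu : 0 ≤ u) :
    3 * u ^ 2 / (2 * u + 6) ≤ bennettH u := by
  set g : ℝ → ℝ := fun v => bennettH v - 3 * v ^ 2 / (2 * v + 6) with hg
  have hg' : ∀ v ∈ Set.Ici (0 : ℝ),
      HasDerivAt g (log (1 + v) - 3 * v * (v + 6) / (2 * (v + 3) ^ 2)) v := by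
    intro v (hv : 0 ≤ v)
    exact (hasDerivAt_bennettH (by positivity)).sub (hasDerivAt_three_mul_sq_div (by positivity))
  have hg'_nonneg :
      ∀ v ∈ Set.Ici (0 : ℝ), 0 ≤ log (1 + v) - 3 * v * (v + 6) / (2 * (v + 3) ^ 2) := by
    intro v (hv : 0 ≤ v)
    have hbernstein : 3 * v * (v + 6) / (2 * (v + 3) ^ 2) ≤ 2 * v / (v + 2) := by
      rw [div_le_div_iff₀ (by positivity) (by positivity)]
      nlinarith [mul_nonneg hv (sq_nonneg v)]
    linarith [le_log_one_add_of_nonneg hv]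
  have hmono : MonotoneOn g (Set.Ici 0) :=
    monotoneOn_of_hasDerivWithinAt_nonneg (convex_Ici 0)
      (fun v hv => (hg' v hv).continuousAt.continuousWithinAt)
      (fun v hv => (hg' v (interior_subset hv)).hasDerivWithinAt)
      (fun v hv => hg'_nonneg v (interior_subset hv))
  have := hmono Set.self_mem_Ici hu hu
  simpa [hg, bennettH] using this

lemma three_mul_div_eight_le_bennettH {ε u : ℝ} (hu : 0 ≤ u) (hεu : ε ≤ u) (hεu2 : ε ≤ u ^ 2) :
    3 * ε / 8 ≤ bennettH u := by
  refine le_trans ?_ (three_mul_sq_div_le_bennettH hu)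
  rw [div_le_div_iff₀ (by norm_num) (by positivity)]
  nlinarith [mul_le_mul_of_nonneg_left hεu hu]

/-- **`O(1/ε)` label complexity of active labeling.** For all `ε ∈ (0, 1]`,
`0 < p ≤ √ε` and `δ ∈ (0,1)`, one has `ln(2/δ)/h(ε/p) ≤ (8/3)·ln(2/δ)/ε`; in particular,
the expected number of labels required by active labeling, namely `p` times the Bennett
sample size `ln(2/δ)/(p·h(ε/p))`, is at most `(8/3)·ln(2/δ)/ε`. -/
theorem active_labeling_label_complexity
    (ε p δ : ℝ) (hε : ε ∈ Set.Ioc (0 : ℝ) 1) (hp : 0 < p) (hpε : p ≤ Real.sqrt ε)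
    (hδ : δ ∈ Set.Ioo (0 : ℝ) 1) :
    Real.log (2 / δ) / bennettH (ε / p) ≤ (8 / 3) * Real.log (2 / δ) / ε ∧
    p * (Real.log (2 / δ) / (p * bennettH (ε / p))) ≤ (8 / 3) * Real.log (2 / δ) / ε := by
  obtain ⟨hε0, hε1⟩ := hε
  obtain ⟨hδ0, hδ1⟩ := hδ
  have hsqrt_le : √ε ≤ ε / p := by
    rw [le_div_iff₀ hp]
    calc √ε * p ≤ √ε * √ε := mul_le_mul_of_nonneg_left hpε (sqrt_nonneg ε)
      _ = ε := mul_self_sqrt hε0.le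
  have hε_le : ε ≤ ε / p := le_div_self hε0.le hp (hpε.trans (sqrt_le_one.mpr hε1))
  have hε_le_sq : ε ≤ (ε / p) ^ 2 := by
    simpa [sq_sqrt hε0.le] using pow_le_pow_left₀ (sqrt_nonneg ε) hsqrt_le 2
  have hH : 3 * ε / 8 ≤ bennettH (ε / p) :=
    three_mul_div_eight_le_bennettH (by positivity) hε_le hε_le_sq
  have hlog : 0 ≤ log (2 / δ) := log_nonneg (by rw [le_div_iff₀ hδ0]; linarith)
  have hbound : log (2 / δ) / bennettH (ε / p) ≤ (8 / 3) * log (2 / δ) / ε :=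
    calc log (2 / δ) / bennettH (ε / p) ≤ log (2 / δ) / (3 * ε / 8) :=
          div_le_div_of_nonneg_left hlog (by positivity) hH
      _ = (8 / 3) * log (2 / δ) / ε := by field_simp
  refine ⟨hbound, ?_⟩
  rwa [mul_div_assoc', mul_div_mul_left _ _ hp.ne']
end
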